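/- For any σ ∈ ((n−2)π/2, nπ/2), the set Γ^σ = {λ ∈ ℝⁿ : ∑ᵢ arctan λᵢ > σ} is a convex subset of ℝⁿ. -/

import Mathlib

open Real Finset

/-!
Induction on `n`. Splitting off one coordinate, `Γ^σ ⊆ ℝⁿ⁺¹` is the strict epigraph of
`f y = tan (σ - ∑ arctan yᵢ)` over `Γ^(σ - π/2) ⊆ ℝⁿ`, so it suffices that `f` is convex there.
Along a line `y = x + t d`, with `μᵢ = dᵢ / (1 + yᵢ²)`, one finds
`f'' = 2 (1 + f²) (∑ yᵢ μᵢ² + f (∑ μᵢ)²)`: the quadratic form `∑ Λᵢ νᵢ²` of `Λ = (f, y)` at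
`ν = (-∑ μᵢ, μ)`, whose coordinates sum to zero, while `∑ arctan Λᵢ = σ > (n - 1) π/2`. Such a `Λ`
has at most one negative entry `Λⱼ`, and subadditivity of `arctan` on `[0, ∞)` gives
`∑_{i ≠ j} 1/Λᵢ < -1/Λⱼ`; by Cauchy–Schwarz the other terms then dominate `Λⱼ νⱼ²`.
-/

namespace Real

variable {ι : Type*}

lemma arctan_add_le_arctan_add_arctan {x y : ℝ} (hx : 0 ≤ x) (hy : 0 ≤ y) :
    arctan (x + y) ≤ arctan x + arctan y := by
  rcases lt_or_ge (x * y) 1 with hxy | hxy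
  · rw [arctan_add hxy]
    apply arctan_mono
    rw [le_div_iff₀ (by linarith)]
    nlinarith [mul_nonneg (add_nonneg hx hy) (mul_nonneg hx hy)]
  · have hx₀ : 0 < x := by nlinarith
    have hyx : arctan x⁻¹ ≤ arctan y := arctan_mono <| by
      rw [inv_le_iff_one_le_mul₀ hx₀]; nlinarith
    rw [arctan_inv_of_pos hx₀] at hyx
    linarith [arctan_lt_pi_div_two (x + y)]

lemma arctan_sum_le_sum_arctan (s : Finset ι) {f : ι → ℝ} (hf : ∀ i ∈ s, 0 ≤ f i) :
    arctan (∑ i ∈ s, f i) ≤ ∑ i ∈ s, arctan (f i) :=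
  le_sum_of_subadditive_on_pred arctan (0 ≤ ·) arctan_zero.le
    (fun _ _ => arctan_add_le_arctan_add_arctan) (fun _ _ => add_nonneg) f hf

lemma sum_arctan_le_card_mul (s : Finset ι) (f : ι → ℝ) :
    ∑ i ∈ s, arctan (f i) ≤ #s * (π / 2) := by
  simpa using s.sum_le_card_nsmul (fun i => arctan (f i)) (π / 2)
    fun i _ => (arctan_lt_pi_div_two _).le

lemma lt_arctan_of_lt_sum_arctan {s : Finset ι} {f : ι → ℝ} {a : ℝ}
    (h : (#s - 1) * (π / 2) + a < ∑ i ∈ s, arctan (f i)) {i : ι} (hi : i ∈ s) :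
    a < arctan (f i) := by
  classical
  have hrest := sum_arctan_le_card_mul (s.erase i) f
  rw [card_erase_of_mem hi, Nat.cast_pred (card_pos.2 ⟨i, hi⟩)] at hrest
  rw [← add_sum_erase s _ hi] at h
  linarith

lemma sum_inv_lt_inv_of_lt_sum_arctan {s : Finset ι} {f : ι → ℝ} {b : ℝ}
    (hb : 0 < b) (h : (#s - 1) * (π / 2) + arctan b < ∑ i ∈ s, arctan (f i)) :
    ∑ i ∈ s, (f i)⁻¹ < b⁻¹ := by
  have hf : ∀ i ∈ s, 0 < f i := fun i hi =>
    arctan_pos.1 ((arctan_pos.2 hb).trans (lt_arctan_of_lt_sum_arctan h hi))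
  rw [← arctan_lt_arctan_iff, arctan_inv_of_pos hb]
  calc arctan (∑ i ∈ s, (f i)⁻¹)
      ≤ ∑ i ∈ s, arctan (f i)⁻¹ := arctan_sum_le_sum_arctan s fun i hi => (inv_pos.2 (hf i hi)).le
    _ = #s * (π / 2) - ∑ i ∈ s, arctan (f i) := by
      rw [sum_congr rfl fun i hi => arctan_inv_of_pos (hf i hi), sum_sub_distrib, sum_const,
        nsmul_eq_mul]
    _ < π / 2 - arctan b := by linarith

theorem sum_mul_sq_nonneg_of_lt_sum_arctan [Fintype ι] {Λ μ : ι → ℝ}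
    (hΛ : (Fintype.card ι - 2) * (π / 2) < ∑ i, arctan (Λ i)) (hμ : ∑ i, μ i = 0) :
    0 ≤ ∑ i, Λ i * μ i ^ 2 := by
  classical
  obtain hΛ₀ | ⟨j, hj⟩ := forall_or_exists_not (0 ≤ Λ ·)
  · exact sum_nonneg fun i _ => mul_nonneg (hΛ₀ i) (sq_nonneg _)
  rw [not_le] at hj
  set b := -Λ j
  have hb : 0 < b := neg_pos.2 hj
  set s := univ.erase j
  have hcard : (#s : ℝ) = Fintype.card ι - 1 := by
    rw [card_erase_of_mem (mem_univ j), card_univ,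
      Nat.cast_pred (Fintype.card_pos_iff.2 ⟨j⟩)]
  have hΛs : (#s - 1) * (π / 2) + arctan b < ∑ i ∈ s, arctan (Λ i) := by
    rw [← add_sum_erase _ _ (mem_univ j)] at hΛ
    rw [hcard, arctan_neg]
    linarith
  have hpos : ∀ i ∈ s, 0 < Λ i := fun i hi =>
    arctan_pos.1 ((arctan_pos.2 hb).trans (lt_arctan_of_lt_sum_arctan hΛs hi))
  have hinv : b * ∑ i ∈ s, (Λ i)⁻¹ ≤ 1 := by
    have := mul_lt_mul_of_pos_left (sum_inv_lt_inv_of_lt_sum_arctan hb hΛs) hb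
    rw [mul_inv_cancel₀ hb.ne'] at this
    exact this.le
  have hμj : μ j = -∑ i ∈ s, μ i := by
    rw [← add_sum_erase _ _ (mem_univ j)] at hμ
    linarith
  have hCS : μ j ^ 2 ≤ (∑ i ∈ s, (Λ i)⁻¹) * ∑ i ∈ s, Λ i * μ i ^ 2 := by
    rw [hμj, neg_sq]
    refine sum_sq_le_sum_mul_sum_of_sq_le_mul s (fun i hi => (inv_pos.2 (hpos i hi)).le)
      (fun i hi => mul_nonneg (hpos i hi).le (sq_nonneg _)) fun i hi => ?_
    rw [inv_mul_cancel_left₀ (hpos i hi).ne']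
  have hS : 0 ≤ ∑ i ∈ s, Λ i * μ i ^ 2 :=
    sum_nonneg fun i hi => mul_nonneg (hpos i hi).le (sq_nonneg _)
  rw [← add_sum_erase _ _ (mem_univ j)]
  nlinarith

lemma mul_sq_sum_add_sum_mul_sq_nonneg [Fintype ι] {y μ : ι → ℝ} {z : ℝ}
    (h : (Fintype.card ι - 1) * (π / 2) < arctan z + ∑ i, arctan (y i)) :
    0 ≤ z * (∑ i, μ i) ^ 2 + ∑ i, y i * μ i ^ 2 := by
  have := sum_mul_sq_nonneg_of_lt_sum_arctan (Λ := fun o : Option ι => o.elim z y)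
    (μ := fun o => o.elim (-∑ i, μ i) μ)
    (by
      simp only [Fintype.sum_option, Fintype.card_option, Option.elim_none, Option.elim_some]
      push_cast
      linarith)
    (by simp [Fintype.sum_option])
  simpa [Fintype.sum_option] using this

lemma lt_arctan_add_iff {σ S z : ℝ} (hS : S < σ + π / 2) :
    σ < arctan z + S ↔ σ - π / 2 < S ∧ tan (σ - S) < z := by
  by_cases hσS : σ - π / 2 < S
  · rw [← arctan_lt_arctan_iff (x := tan _), arctan_tan (by linarith) (by linarith)]
    exact ⟨fun h => ⟨hσS, by linarith⟩, fun h => by linarith [h.2]⟩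
  · simp only [hσS, false_and, iff_false, not_lt]
    linarith [arctan_lt_pi_div_two z]

end Real

theorem HasDerivAt.tan {u : ℝ → ℝ} {u' t : ℝ} (hu : HasDerivAt u u' t)
    (hcos : Real.cos (u t) ≠ 0) :
    HasDerivAt (fun s => Real.tan (u s)) (u' * (1 + Real.tan (u t) ^ 2)) t := by
  refine ((hasDerivAt_tan hcos).comp t hu).congr_deriv ?_
  rw [one_div, ← inv_one_add_tan_sq hcos, inv_inv, mul_comm]

theorem convexOn_tan_comp {I : Set ℝ} (hI : Convex ℝ I) (hIo : IsOpen I) {u u' u'' : ℝ → ℝ}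
    (hu : ∀ t ∈ I, HasDerivAt u (u' t) t) (hu' : ∀ t ∈ I, HasDerivAt u' (u'' t) t)
    (hcos : ∀ t ∈ I, cos (u t) ≠ 0) (h : ∀ t ∈ I, 0 ≤ u'' t + 2 * tan (u t) * u' t ^ 2) :
    ConvexOn ℝ I (fun t => tan (u t)) := by
  have hf : ∀ t ∈ I, HasDerivAt (fun s => tan (u s)) (u' t * (1 + tan (u t) ^ 2)) t :=
    fun t ht => (hu t ht).tan (hcos t ht)
  have hf' : ∀ t ∈ I, HasDerivAt (fun s => u' s * (1 + tan (u s) ^ 2))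
      ((1 + tan (u t) ^ 2) * (u'' t + 2 * tan (u t) * u' t ^ 2)) t := by
    intro t ht
    refine ((hu' t ht).mul (((hf t ht).fun_pow 2).const_add 1)).congr_deriv ?_
    ring
  rw [← hIo.interior_eq] at hf hf' h
  refine convexOn_of_hasDerivWithinAt2_nonneg hI ?_ (fun t ht => (hf t ht).hasDerivWithinAt)
    (fun t ht => (hf' t ht).hasDerivWithinAt) fun t ht => mul_nonneg (by positivity) (h t ht)
  rw [hIo.interior_eq] at hf
  exact fun t ht => (hf t ht).continuousAt.continuousWithinAt

section Line

variable {ι : Type*} [Fintype ι] (x d : ι → ℝ) (t : ℝ)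

lemma hasDerivAt_sum_arctan_line :
    HasDerivAt (fun s => ∑ i, arctan (x i + s * d i)) (∑ i, d i / (1 + (x i + t * d i) ^ 2)) t :=
  HasDerivAt.fun_sum fun i _ =>
    (((hasDerivAt_mul_const (d i)).const_add (x i)).arctan).congr_deriv (by ring)

lemma hasDerivAt_sum_div_one_add_sq_line :
    HasDerivAt (fun s => ∑ i, d i / (1 + (x i + s * d i) ^ 2))
      (-2 * ∑ i, (x i + t * d i) * (d i / (1 + (x i + t * d i) ^ 2)) ^ 2) t := by
  rw [mul_sum]
  refine HasDerivAt.fun_sum fun i _ => ?_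
  have hpos : 0 < 1 + (x i + t * d i) ^ 2 := by positivity
  have hy := (hasDerivAt_mul_const (d i)).const_add (x i) (x := t)
  refine ((hasDerivAt_const t (d i)).fun_div ((hy.fun_pow 2).const_add 1)
    hpos.ne').congr_deriv ?_
  field_simp
  ring

theorem convexOn_tan_sub_sum_arctan_line {σ : ℝ} (hσ : (Fintype.card ι - 1) * (π / 2) < σ)
    (hT : Convex ℝ {t : ℝ | σ - π / 2 < ∑ i, arctan (x i + t * d i)}) :
    ConvexOn ℝ {t : ℝ | σ - π / 2 < ∑ i, arctan (x i + t * d i)}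
      (fun t => tan (σ - ∑ i, arctan (x i + t * d i))) := by
  have hψ := hasDerivAt_sum_arctan_line x d
  have hIoo : ∀ t ∈ {t : ℝ | σ - π / 2 < ∑ i, arctan (x i + t * d i)},
      σ - ∑ i, arctan (x i + t * d i) ∈ Set.Ioo (-(π / 2)) (π / 2) := fun t ht => by
    have := sum_arctan_le_card_mul univ fun i => x i + t * d i
    rw [card_univ] at this
    exact ⟨by linarith, by linarith [ht.out]⟩
  refine convexOn_tan_comp hT
    (isOpen_lt continuous_const (continuous_iff_continuousAt.2 fun t => (hψ t).continuousAt))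
    (u' := fun t => -∑ i, d i / (1 + (x i + t * d i) ^ 2))
    (u'' := fun t => 2 * ∑ i, (x i + t * d i) * (d i / (1 + (x i + t * d i) ^ 2)) ^ 2)
    (fun t _ => (hψ t).const_sub σ)
    (fun t _ => (hasDerivAt_sum_div_one_add_sq_line x d t).neg.congr_deriv (by ring))
    (fun t ht => (cos_pos_of_mem_Ioo (hIoo t ht)).ne') fun t ht => ?_
  have hΛ := mul_sq_sum_add_sum_mul_sq_nonneg (y := fun i => x i + t * d i)
    (μ := fun i => d i / (1 + (x i + t * d i) ^ 2)) (z := tan (σ - ∑ i, arctan (x i + t * d i)))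
    (by rw [arctan_tan (hIoo t ht).1 (hIoo t ht).2]; linarith)
  simp only [neg_sq]
  linarith

end Line

theorem convexOn_tan_sub_sum_arctan {ι : Type*} [Fintype ι] {σ : ℝ}
    (hσ : (Fintype.card ι - 1) * (π / 2) < σ)
    (hD : Convex ℝ {y : ι → ℝ | σ - π / 2 < ∑ i, arctan (y i)}) :
    ConvexOn ℝ {y : ι → ℝ | σ - π / 2 < ∑ i, arctan (y i)}
      (fun y => tan (σ - ∑ i, arctan (y i))) := by
  refine ⟨hD, fun p hp q hq a b ha hb hab => ?_⟩
  have hT : Convex ℝ {t : ℝ | σ - π / 2 < ∑ i, arctan (p i + t * (q - p) i)} := by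
    have hpre : AffineMap.lineMap p q ⁻¹' {y : ι → ℝ | σ - π / 2 < ∑ i, arctan (y i)}
        = {t : ℝ | σ - π / 2 < ∑ i, arctan (p i + t * (q - p) i)} := by
      ext t
      simp [AffineMap.lineMap_apply_module', add_comm]
    exact hpre ▸ hD.affine_preimage (AffineMap.lineMap p q)
  have hline := (convexOn_tan_sub_sum_arctan_line p (q - p) hσ hT).2
    (x := 0) (y := 1) (by simpa using hp) (by simpa using hq) ha hb hab
  have hcomb : ∀ i, p i + b * (q i - p i) = a * p i + b * q i := fun i => by
    linear_combination (-p i) * hab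
  simpa [hcomb] using hline

theorem stmt5_general (n : ℕ) (σ : ℝ)
    (h1 : ((n : ℝ) - 2) * (π / 2) < σ) :
    Convex ℝ {lam : Fin n → ℝ | σ < ∑ i, Real.arctan (lam i)} := by
  induction n generalizing σ with
  | zero => exact Set.subsingleton_of_subsingleton.convex
  | succ n ih =>
    have hσ : ((n : ℝ) - 1) * (π / 2) < σ := by push_cast at h1; linarith
    have hf := convexOn_tan_sub_sum_arctan (by simpa using hσ) (ih (σ - π / 2) (by linarith))
    have hΓ : {lam : Fin (n + 1) → ℝ | σ < ∑ i, arctan (lam i)} =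
        (LinearMap.funLeft ℝ ℝ Fin.succ).prod (LinearMap.proj 0) ⁻¹'
          {p | p.1 ∈ {y : Fin n → ℝ | σ - π / 2 < ∑ i, arctan (y i)} ∧
            tan (σ - ∑ i, arctan (p.1 i)) < p.2} := by
      ext lam
      have hS := sum_arctan_le_card_mul univ fun i : Fin n => lam i.succ
      rw [card_univ, Fintype.card_fin] at hS
      simpa [Fin.sum_univ_succ] using lt_arctan_add_iff (z := lam 0) (by linarith)
    exact hΓ ▸ hf.convex_strict_epigraph.linear_preimage _

theorem stmt5 (n : ℕ) (hn : 1 ≤ n) (σ : ℝ)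
    (h1 : ((n : ℝ) - 2) * (π / 2) < σ) (h2 : σ < (n : ℝ) * (π / 2)) :
    Convex ℝ {lam : Fin n → ℝ | σ < ∑ i, Real.arctan (lam i)} :=
  stmt5_general n σ h1
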